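/- For α ∈ (0,1), the integral ∫₀¹ log(1-u) / u^{1+α} du equals (1/α)(γ + ψ(1-α)). -/

import Mathlib

open Real MeasureTheory Set

/-- The digamma function `ψ(z) = Γ'(z) / Γ(z)`. -/
noncomputable def digamma (x : ℝ) : ℝ := deriv Real.Gamma x / Real.Gamma x

/-!
Expanding `log (1 - u) = -∑ uⁿ⁺¹ / (n + 1)` and integrating termwise gives
`-∑ 1 / ((n + 1) (n + 1 - α))`, which by partial fractions is
`(1 / α) ∑ (1 / (n + 1) - 1 / (n + 1 - α))`. This is `(1 / α) (γ + ψ (1 - α))` by the series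
`γ + ψ x = ∑ (1 / (n + 1) - 1 / (n + x))`, whose partial sums are, by `ψ (x + 1) = ψ x + 1 / x` and
`ψ 1 = -γ`, equal to `γ + ψ x + (ψ (N + 1) - ψ (N + x))`; the error term lies between `0` and
`1 / (N + x)` for `0 < x ≤ 1` because `ψ` is monotone, `log ∘ Γ` being convex.
-/

open Filter Topology

local notation "γ" => Real.eulerMascheroniConstant

lemma summable_one_div_mul_add {x : ℝ} (hx : 0 < x) :
    Summable fun n : ℕ => 1 / (((n : ℝ) + 1) * (n + x)) := by
  have hm : 0 < min 1 x := lt_min one_pos hx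
  have hsq : Summable fun n : ℕ => (min 1 x)⁻¹ * (1 / ((n : ℝ) + 1) ^ 2) := by
    refine Summable.mul_left _ ?_
    exact_mod_cast (summable_nat_add_iff 1).mpr (Real.summable_one_div_nat_pow.mpr one_lt_two)
  refine hsq.of_nonneg_of_le (fun n => by positivity) fun n => ?_
  have hmx : min 1 x * ((n : ℝ) + 1) ≤ n + x := by
    nlinarith [min_le_left 1 x, min_le_right 1 x, (n.cast_nonneg : (0 : ℝ) ≤ n)]
  calc 1 / (((n : ℝ) + 1) * (n + x)) ≤ 1 / ((n + 1) * (min 1 x * (n + 1))) := by gcongr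
    _ = (min 1 x)⁻¹ * (1 / ((n : ℝ) + 1) ^ 2) := by field_simp

lemma integral_Ioo_zero_one_rpow {s : ℝ} (hs : -1 < s) :
    ∫ u in Ioo (0 : ℝ) 1, u ^ s = 1 / (s + 1) := by
  rw [← integral_Ioc_eq_integral_Ioo, ← intervalIntegral.integral_of_le zero_le_one,
    integral_rpow (Or.inl hs), one_rpow, zero_rpow (by linarith), sub_zero]

lemma hasSum_log_one_sub_div_rpow {u : ℝ} (hu : u ∈ Ioo (0 : ℝ) 1) (α : ℝ) :
    HasSum (fun n : ℕ => -(u ^ ((n : ℝ) - α) / (n + 1))) (log (1 - u) / u ^ (1 + α)) := by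
  have hterm : (fun n : ℕ => -(u ^ ((n : ℝ) - α) / (n + 1))) =
      fun n : ℕ => -(u ^ (n + 1) / (n + 1)) / u ^ (1 + α) := by
    funext n
    rw [neg_div, div_right_comm, ← rpow_natCast, ← rpow_sub hu.1]
    push_cast; ring_nf
  rw [hterm, ← neg_neg (log (1 - u))]
  exact (hasSum_pow_div_log_of_abs_lt_one (abs_lt.mpr ⟨by linarith [hu.1], hu.2⟩)).neg.div_const _

lemma hasSum_integral_log_one_sub_div_rpow {α : ℝ} (hα : α < 1) :
    HasSum (fun n : ℕ => -(1 / (((n : ℝ) + 1) * (n + 1 - α))))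
      (∫ u in Ioo (0 : ℝ) 1, log (1 - u) / u ^ (1 + α)) := by
  set F : ℕ → ℝ → ℝ := fun n u => -(u ^ ((n : ℝ) - α) / (n + 1))
  have hexp (n : ℕ) : -1 < (n : ℝ) - α := by linarith [n.cast_nonneg (α := ℝ)]
  have hint (n : ℕ) : Integrable (F n) (volume.restrict (Ioo 0 1)) :=
    (((intervalIntegral.integrableOn_Ioo_rpow_iff zero_lt_one).mpr (hexp n)).div_const _).neg
  have hF (n : ℕ) : ∫ u in Ioo (0 : ℝ) 1, F n u = -(1 / (((n : ℝ) + 1) * (n + 1 - α))) := by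
    rw [integral_neg, integral_div, integral_Ioo_zero_one_rpow (hexp n), div_div, sub_add_eq_add_sub,
      mul_comm]
  have hnorm (n : ℕ) : ∫ u in Ioo (0 : ℝ) 1, ‖F n u‖ = 1 / (((n : ℝ) + 1) * (n + 1 - α)) := by
    rw [← neg_neg (1 / _), ← hF n, ← integral_neg]
    refine setIntegral_congr_fun measurableSet_Ioo fun u hu => ?_
    exact norm_of_nonpos (neg_nonpos.mpr (by have := rpow_nonneg hu.1.le ((n : ℝ) - α); positivity))
  have hsummable : Summable fun n : ℕ => ∫ u in Ioo (0 : ℝ) 1, ‖F n u‖ := by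
    simpa only [hnorm, add_sub_assoc] using summable_one_div_mul_add (sub_pos.mpr hα)
  have hsum := hasSum_integral_of_summable_integral_norm hint hsummable
  simp only [hF] at hsum
  rwa [setIntegral_congr_fun measurableSet_Ioo fun u hu =>
    (hasSum_log_one_sub_div_rpow hu α).tsum_eq.symm]

lemma differentiableAt_Gamma_of_pos {x : ℝ} (hx : 0 < x) : DifferentiableAt ℝ Gamma x :=
  differentiableAt_Gamma fun m => ((neg_nonpos.mpr m.cast_nonneg).trans_lt hx).ne'

lemma differentiableAt_log_Gamma {x : ℝ} (hx : 0 < x) : DifferentiableAt ℝ (log ∘ Gamma) x :=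
  (differentiableAt_Gamma_of_pos hx).log (Gamma_pos_of_pos hx).ne'

lemma digamma_eq_deriv_log_Gamma {x : ℝ} (hx : 0 < x) : digamma x = deriv (log ∘ Gamma) x := by
  rw [digamma, Function.comp_def,
    deriv.log (differentiableAt_Gamma_of_pos hx) (Gamma_pos_of_pos hx).ne']

lemma digamma_one : digamma 1 = -γ := by
  rw [digamma, Gamma_one, div_one, eulerMascheroniConstant_eq_neg_deriv, neg_neg]

lemma digamma_add_one {x : ℝ} (hx : 0 < x) : digamma (x + 1) = digamma x + x⁻¹ := by
  rw [digamma_eq_deriv_log_Gamma (by positivity), digamma_eq_deriv_log_Gamma hx,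
    ← deriv_comp_add_const, ← deriv_log,
    ← deriv_add (differentiableAt_log_Gamma hx) (differentiableAt_log hx.ne')]
  apply EventuallyEq.deriv_eq
  filter_upwards [eventually_gt_nhds hx] with t ht
  simp only [Function.comp_apply, Pi.add_apply, Gamma_add_one ht.ne',
    log_mul ht.ne' (Gamma_pos_of_pos ht).ne', add_comm]

lemma digamma_add_nat {x : ℝ} (hx : 0 < x) (n : ℕ) :
    digamma (x + n) = digamma x + ∑ k ∈ Finset.range n, (x + k)⁻¹ := by
  induction n with
  | zero => simp
  | succ n ih =>
    rw [Nat.cast_succ, ← add_assoc, digamma_add_one (by positivity), ih, Finset.sum_range_succ,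
      add_assoc]

lemma monotoneOn_digamma : MonotoneOn digamma (Ioi 0) :=
  (convexOn_log_Gamma.monotoneOn_deriv fun _ hx => differentiableAt_log_Gamma hx).congr
    fun _ hx => (digamma_eq_deriv_log_Gamma hx).symm

lemma tendsto_digamma_one_add_nat_sub_digamma_add_nat {x : ℝ} (hx₀ : 0 < x) (hx₁ : x ≤ 1) :
    Tendsto (fun N : ℕ => digamma (1 + N) - digamma (x + N)) atTop (𝓝 0) := by
  have hlim : Tendsto (fun N : ℕ => (x + N)⁻¹) atTop (𝓝 0) :=
    (tendsto_atTop_add_const_left _ x tendsto_natCast_atTop_atTop).inv_tendsto_atTop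
  refine tendsto_of_tendsto_of_tendsto_of_le_of_le tendsto_const_nhds hlim (fun N => ?_) fun N => ?_
  · have hpos : (0 : ℝ) < x + N := by positivity
    exact sub_nonneg.mpr (monotoneOn_digamma hpos (by positivity : (0 : ℝ) < 1 + N) (by linarith))
  · have hpos : (0 : ℝ) < x + N := by positivity
    have hle := monotoneOn_digamma (by positivity : (0 : ℝ) < 1 + N) (by positivity : 0 < x + N + 1)
      (by linarith)
    rw [digamma_add_one hpos] at hle
    exact sub_le_iff_le_add'.mpr hle

theorem hasSum_inv_sub_inv_digamma {x : ℝ} (hx₀ : 0 < x) (hx₁ : x ≤ 1) :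
    HasSum (fun n : ℕ => ((n : ℝ) + 1)⁻¹ - ((n : ℝ) + x)⁻¹) (γ + digamma x) := by
  have hsummable : Summable fun n : ℕ => ((n : ℝ) + 1)⁻¹ - ((n : ℝ) + x)⁻¹ := by
    refine ((summable_one_div_mul_add hx₀).mul_left (x - 1)).congr fun n => ?_
    have : (n : ℝ) + x ≠ 0 := by positivity
    field_simp
    ring
  have hpartial (N : ℕ) : ∑ n ∈ Finset.range N, (((n : ℝ) + 1)⁻¹ - ((n : ℝ) + x)⁻¹) =
      γ + digamma x + (digamma (1 + N) - digamma (x + N)) := by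
    rw [Finset.sum_sub_distrib, digamma_add_nat hx₀, digamma_add_nat one_pos, digamma_one]
    simp only [add_comm (1 : ℝ), add_comm x]
    ring
  rw [hsummable.hasSum_iff_tendsto_nat]
  simp_rw [hpartial]
  simpa using tendsto_const_nhds.add (tendsto_digamma_one_add_nat_sub_digamma_add_nat hx₀ hx₁)

theorem stmt_5 (α : ℝ) (hα₁ : 0 < α) (hα₂ : α < 1) :
    ∫ u in Ioo (0 : ℝ) 1, Real.log (1 - u) / u ^ (1 + α) =
      (1 / α) * (Real.eulerMascheroniConstant + digamma (1 - α)) := by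
  have hψ := (hasSum_inv_sub_inv_digamma (sub_pos.mpr hα₂) (by linarith)).mul_left (1 / α)
  have hterm : (fun n : ℕ => -(1 / (((n : ℝ) + 1) * (n + 1 - α)))) =
      fun n : ℕ => 1 / α * (((n : ℝ) + 1)⁻¹ - ((n : ℝ) + (1 - α))⁻¹) := by
    funext n
    have : (n : ℝ) + 1 - α ≠ 0 := by linarith [n.cast_nonneg (α := ℝ)]
    have : (n : ℝ) + (1 - α) ≠ 0 := by linarith [n.cast_nonneg (α := ℝ)]
    field_simp
    ring
  exact (hasSum_integral_log_one_sub_div_rpow hα₂).unique (hterm ▸ hψ)
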